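/- arXiv:math/0512056 — 4 statements merged into one kernel-verified Lean document; each statement's English description precedes it below -/
import Mathlib

section
/- Let E be a Polish space equipped with its Borel σ-algebra, and let λ₁, λ₂ be probability measures on E. Then there exists a maximal coupling of (λ₁, λ₂), i.e. a probability measure ζ on E × E whose first marginal is λ₁ and second marginal is λ₂, and such that ζ({(x, y) ∈ E × E : x ≠ y}) = ‖λ₁ − λ₂‖_var. -/
open MeasureTheory

/-- Total variation distance between two measures:
`sup { |μ(Γ) − ν(Γ)| : Γ measurable }`. -/
noncomputable def tvDist {E : Type*} [MeasurableSpace E] (μ ν : Measure E) : ℝ :=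
  sSup {r : ℝ | ∃ Γ : Set E, MeasurableSet Γ ∧ r = |(μ Γ).toReal - (ν Γ).toReal|}

/-!
A Hahn decomposition splits `λ₁ = ν + ρ₁` and `λ₂ = ν + ρ₂` with `ρ₁ ⟂ₘ ρ₂`; then
`‖λ₁ - λ₂‖_var = ρ₁(E) = ρ₂(E)`, attained on a set carrying `ρ₁` and null for `ρ₂`. Put the common
part `ν` on the diagonal and couple the residuals independently, normalised by `ρ₁(E)`. Since
`ρ₁ ⊗ ρ₂` lives on `Nᶜ × N` for a set `N` separating `ρ₁` from `ρ₂`, it gives the diagonal no mass,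
so the complement of the diagonal receives exactly `ρ₁(E)`.
-/

open Set

namespace MeasureTheory.Measure

variable {E : Type*} [MeasurableSpace E]

theorem restrict_le_restrict_of_forall_le {μ ν : Measure E} {s : Set E} (hs : MeasurableSet s)
    (h : ∀ t, MeasurableSet t → t ⊆ s → ν t ≤ μ t) : ν.restrict s ≤ μ.restrict s :=
  le_iff.mpr fun t ht => by
    rw [restrict_apply ht, restrict_apply ht]
    exact h _ (ht.inter hs) inter_subset_right

theorem exists_eq_add_eq_add_mutuallySingular (μ₁ μ₂ : Measure E)
    [IsFiniteMeasure μ₁] [IsFiniteMeasure μ₂] :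
    ∃ ν ρ₁ ρ₂ : Measure E, μ₁ = ν + ρ₁ ∧ μ₂ = ν + ρ₂ ∧ ρ₁ ⟂ₘ ρ₂ := by
  obtain ⟨S, hS, hle₁, hle₂⟩ := hahn_decomposition μ₁ μ₂
  have hS₁ := restrict_le_restrict_of_forall_le hS hle₁
  have hS₂ := restrict_le_restrict_of_forall_le hS.compl hle₂
  refine ⟨μ₂.restrict S + μ₁.restrict Sᶜ, μ₁.restrict S - μ₂.restrict S,
    μ₂.restrict Sᶜ - μ₁.restrict Sᶜ, ?_, ?_, ⟨Sᶜ, hS.compl, ?_, ?_⟩⟩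
  · conv_lhs => rw [← restrict_add_restrict_compl (μ := μ₁) hS, ← sub_add_cancel_of_le hS₁]
    ac_rfl
  · conv_lhs => rw [← restrict_add_restrict_compl (μ := μ₂) hS, ← sub_add_cancel_of_le hS₂]
    ac_rfl
  · exact absolutelyContinuous_of_le sub_le (by simp [hS.compl])
  · exact absolutelyContinuous_of_le sub_le (by simp [hS])


theorem prod_compl_diagonal_of_mutuallySingular {ρ₁ ρ₂ : Measure E} [IsFiniteMeasure ρ₂]
    (hρ : ρ₁ ⟂ₘ ρ₂) : ρ₁.prod ρ₂ (diagonal E)ᶜ = ρ₁ univ * ρ₂ univ := by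
  refine le_antisymm ?_ ?_
  · rw [← prod_prod, univ_prod_univ]
    exact measure_mono (subset_univ _)
  set N := hρ.nullSet
  have hN : MeasurableSet N := hρ.measurableSet_nullSet
  have h₁ : ρ₁ Nᶜ = ρ₁ univ := by
    rw [← measure_add_measure_compl (μ := ρ₁) hN, hρ.measure_nullSet, zero_add]
  have h₂ : ρ₂ N = ρ₂ univ := by
    rw [← measure_add_measure_compl (μ := ρ₂) hN, hρ.measure_compl_nullSet, add_zero]
  calc ρ₁ univ * ρ₂ univ = ρ₁.prod ρ₂ (Nᶜ ×ˢ N) := by rw [prod_prod, h₁, h₂]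
    _ ≤ _ := measure_mono <| by
      rintro p ⟨hp₁, hp₂⟩ (h : p.1 = p.2)
      exact hp₁ (h ▸ hp₂)

theorem inv_measure_univ_smul_smul (μ : Measure E) [IsFiniteMeasure μ] :
    (μ univ)⁻¹ • (μ univ • μ) = μ := by
  ext s -
  simp only [smul_apply, smul_eq_mul]
  exact ENNReal.inv_mul_cancel_left' (measure_mono_null (subset_univ s))
    (absurd · (measure_ne_top μ univ))

noncomputable def diagCoupling (ν ρ₁ ρ₂ : Measure E) : Measure (E × E) :=
  ν.map Function.diag + (ρ₁ univ)⁻¹ • ρ₁.prod ρ₂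

variable {ν ρ₁ ρ₂ : Measure E}

theorem diagCoupling_map_fst [IsFiniteMeasure ρ₁] [SFinite ρ₂] (hmass : ρ₁ univ = ρ₂ univ) :
    (diagCoupling ν ρ₁ ρ₂).map Prod.fst = ν + ρ₁ := by
  rw [diagCoupling, Measure.map_add _ _ measurable_fst, Measure.map_smul,
    map_map measurable_fst measurable_diag, Function.fst_comp_diag, map_id, map_fst_prod, ← hmass,
    inv_measure_univ_smul_smul]

theorem diagCoupling_map_snd [SFinite ρ₁] [IsFiniteMeasure ρ₂] (hmass : ρ₁ univ = ρ₂ univ) :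
    (diagCoupling ν ρ₁ ρ₂).map Prod.snd = ν + ρ₂ := by
  rw [diagCoupling, Measure.map_add _ _ measurable_snd, Measure.map_smul,
    map_map measurable_snd measurable_diag, Function.snd_comp_diag, map_id, map_snd_prod, hmass,
    inv_measure_univ_smul_smul]

theorem diagCoupling_compl_diagonal [MeasurableEq E] [IsFiniteMeasure ρ₁] [IsFiniteMeasure ρ₂]
    (hρ : ρ₁ ⟂ₘ ρ₂) (hmass : ρ₁ univ = ρ₂ univ) :
    diagCoupling ν ρ₁ ρ₂ (diagonal E)ᶜ = ρ₁ univ := by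
  have hdiag : Function.diag ⁻¹' (diagonal E)ᶜ = ∅ := by ext; simp
  rw [diagCoupling, add_apply, smul_apply,
    map_apply measurable_diag measurableSet_diagonal.compl, hdiag,
    measure_empty, zero_add, prod_compl_diagonal_of_mutuallySingular hρ, ← hmass, smul_eq_mul,
    ENNReal.inv_mul_cancel_left' id (absurd · (measure_ne_top ρ₁ univ))]

end MeasureTheory.Measure

open Measure in
theorem tvDist_add_add_of_mutuallySingular {E : Type*} [MeasurableSpace E] {ν ρ₁ ρ₂ : Measure E}
    [IsFiniteMeasure ν] [IsFiniteMeasure ρ₁] [IsFiniteMeasure ρ₂] (hρ : ρ₁ ⟂ₘ ρ₂)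
    (hmass : ρ₁ univ = ρ₂ univ) :
    tvDist (ν + ρ₁) (ν + ρ₂) = (ρ₁ univ).toReal := by
  have hdiff (Γ : Set E) :
      ((ν + ρ₁) Γ).toReal - ((ν + ρ₂) Γ).toReal = (ρ₁ Γ).toReal - (ρ₂ Γ).toReal := by
    simp only [add_apply, ENNReal.toReal_add (measure_ne_top _ _) (measure_ne_top _ _)]
    ring
  have hle (ρ : Measure E) [IsFiniteMeasure ρ] (Γ : Set E) : (ρ Γ).toReal ≤ (ρ univ).toReal :=
    ENNReal.toReal_mono (measure_ne_top _ _) (measure_mono (subset_univ Γ))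
  set N := hρ.nullSet
  have hN : MeasurableSet N := hρ.measurableSet_nullSet
  refine IsGreatest.csSup_eq ⟨⟨Nᶜ, hN.compl, ?_⟩, ?_⟩
  · rw [hdiff, hρ.measure_compl_nullSet, measure_compl hN (measure_ne_top _ _),
      hρ.measure_nullSet, tsub_zero, ENNReal.toReal_zero, sub_zero,
      abs_of_nonneg ENNReal.toReal_nonneg]
  · rintro r ⟨Γ, -, rfl⟩
    rw [hdiff]
    refine abs_sub_le_of_nonneg_of_le ENNReal.toReal_nonneg (hle ρ₁ Γ) ENNReal.toReal_nonneg ?_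
    exact hmass ▸ hle ρ₂ Γ

open Measure in
/-- existence of a maximal coupling of two probability measures on a Polish
space: a probability measure on `E × E` with marginals `λ₁, λ₂` giving the complement of
the diagonal exactly the total variation distance. -/
theorem exists_maximal_coupling
    {E : Type*} [TopologicalSpace E] [PolishSpace E] [MeasurableSpace E] [BorelSpace E]
    (lam₁ lam₂ : Measure E) [IsProbabilityMeasure lam₁] [IsProbabilityMeasure lam₂] :
    ∃ ζ : Measure (E × E), IsProbabilityMeasure ζ ∧
      ζ.map Prod.fst = lam₁ ∧ ζ.map Prod.snd = lam₂ ∧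
      (ζ {p : E × E | p.1 ≠ p.2}).toReal = tvDist lam₁ lam₂ := by
  obtain ⟨ν, ρ₁, ρ₂, rfl, rfl, hρ⟩ := exists_eq_add_eq_add_mutuallySingular lam₁ lam₂
  have : IsFiniteMeasure ν := isFiniteMeasure_of_le (ν + ρ₁) (Measure.le_add_right le_rfl)
  have : IsFiniteMeasure ρ₁ := isFiniteMeasure_of_le (ν + ρ₁) (Measure.le_add_left le_rfl)
  have : IsFiniteMeasure ρ₂ := isFiniteMeasure_of_le (ν + ρ₂) (Measure.le_add_left le_rfl)
  have hmass : ρ₁ univ = ρ₂ univ := by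
    have h : (ν + ρ₁) univ = (ν + ρ₂) univ := by rw [measure_univ, measure_univ]
    rwa [add_apply, add_apply, ENNReal.add_right_inj (measure_ne_top ν univ)] at h
  have hfst := diagCoupling_map_fst (ν := ν) hmass
  refine ⟨diagCoupling ν ρ₁ ρ₂, ?_, hfst, diagCoupling_map_snd hmass, ?_⟩
  · have : IsProbabilityMeasure ((diagCoupling ν ρ₁ ρ₂).map Prod.fst) := hfst ▸ inferInstance
    exact isProbabilityMeasure_of_map Prod.fst
  · rw [tvDist_add_add_of_mutuallySingular hρ hmass]
    exact congrArg ENNReal.toReal (diagCoupling_compl_diagonal hρ hmass)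
end

section
/- Let ε > 0 and ε₀ ∈ (0, ε). Let (μₙ)ₙ≥1 be a sequence of positive reals with Σₙ μₙ⁻² < ∞, and let (bₙ)ₙ≥1 be a sequence of nonnegative reals such that Σₙ bₙ² μₙ^{1+ε} < ∞. Then for every α with 0 < α ≤ (ε − ε₀)/(3 + ε), the series Σₙ μₙ^{1+ε₀} bₙ^{2(1−α)} converges. -/
/-!
Write `μ ^ (1 + ε₀) * b ^ (2 (1 - α)) = (b ^ 2 μ ^ (1 + ε)) ^ (1 - α) * (μ ^ e) ^ α` with
`e = 1 + ε - (ε - ε₀) / α`. The bound on `α` is exactly `e ≤ -2`, so `Σ μ ^ e` converges along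
with `Σ μ ^ (-2)`, and the weighted AM–GM inequality `x ^ (1 - α) y ^ α ≤ (1 - α) x + α y`
(Hölder's inequality termwise) bounds the series by a convergent one.
-/

open Filter

theorem summable_rpow_mul_rpow_of_add_eq_one {ι : Type*} {f g : ι → ℝ}
    (hf : ∀ i, 0 ≤ f i) (hg : ∀ i, 0 ≤ g i) (hfs : Summable f) (hgs : Summable g)
    {a b : ℝ} (ha : 0 ≤ a) (hb : 0 ≤ b) (hab : a + b = 1) :
    Summable fun i => f i ^ a * g i ^ b :=
  ((hfs.mul_left a).add (hgs.mul_left b)).of_nonneg_of_le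
    (fun i => mul_nonneg (Real.rpow_nonneg (hf i) a) (Real.rpow_nonneg (hg i) b))
    (fun i => Real.geom_mean_le_arith_mean2_weighted ha hb (hf i) (hg i) hab)

/-- Since `μ ^ p → 0` with `p < 0`, eventually `μ ≥ 1`, where lowering the exponent lowers
the power. -/
theorem summable_rpow_of_le_of_neg {ι : Type*} {μ : ι → ℝ} (hμ : ∀ i, 0 < μ i)
    {p q : ℝ} (hp : p < 0) (hqp : q ≤ p) (h : Summable fun i => μ i ^ p) :
    Summable fun i => μ i ^ q := by
  have h_one_le : ∀ᶠ i in cofinite, 1 ≤ μ i := by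
    filter_upwards [h.tendsto_cofinite_zero.eventually_lt_const one_pos] with i hi
    rcases (Real.rpow_lt_one_iff_of_pos (hμ i)).mp hi with ⟨h1, -⟩ | ⟨-, hp'⟩
    · exact h1.le
    · exact absurd hp' hp.not_gt
  refine h.of_norm_bounded_eventually ?_
  filter_upwards [h_one_le] with i hi
  rw [Real.norm_of_nonneg (Real.rpow_nonneg (hμ i).le q)]
  exact Real.rpow_le_rpow_of_exponent_le hi hqp

theorem summable_factored_noise_coefficients_general
    (ε ε₀ : ℝ) (hε : 0 < ε) (hε₀ : 0 < ε₀)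
    (μ : ℕ → ℝ) (hμ : ∀ n, 0 < μ n)
    (hμsum : Summable fun n => (μ n) ^ (-2 : ℝ))
    (b : ℕ → ℝ) (hb : ∀ n, 0 ≤ b n)
    (hbsum : Summable fun n => (b n) ^ 2 * (μ n) ^ (1 + ε))
    (α : ℝ) (hα : 0 < α) (hα' : α ≤ (ε - ε₀) / (3 + ε)) :
    Summable fun n => (μ n) ^ (1 + ε₀) * (b n) ^ (2 * (1 - α)) := by
  set e := 1 + ε - (ε - ε₀) / α with he_def
  have h3ε : 0 < 3 + ε := by linarith
  have hα_le : α * (3 + ε) ≤ ε - ε₀ := (le_div_iff₀ h3ε).mp hα'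
  have hα_lt_one : α < 1 := by nlinarith
  have he : e ≤ -2 := by
    have : 3 + ε ≤ (ε - ε₀) / α := by rw [le_div_iff₀ hα]; linarith
    linarith
  have hμe : Summable fun n => μ n ^ e :=
    summable_rpow_of_le_of_neg hμ (by norm_num) he hμsum
  refine (summable_rpow_mul_rpow_of_add_eq_one
    (fun n => mul_nonneg (sq_nonneg (b n)) (Real.rpow_nonneg (hμ n).le _))
    (fun n => Real.rpow_nonneg (hμ n).le e) hbsum hμe
    (by linarith) hα.le (sub_add_cancel 1 α)).congr fun n => ?_
  have hμn := hμ n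
  rw [Real.mul_rpow (sq_nonneg _) (Real.rpow_nonneg hμn.le _), ← Real.rpow_natCast (b n) 2,
    ← Real.rpow_mul (hb n), ← Real.rpow_mul hμn.le, ← Real.rpow_mul hμn.le, mul_assoc,
    ← Real.rpow_add hμn]
  have hexp : (1 + ε) * (1 - α) + e * α = 1 + ε₀ := by rw [he_def]; field_simp; ring
  rw [hexp, mul_comm]
  norm_num

/-- if `Σ μₙ⁻² < ∞` and `Σ bₙ² μₙ^{1+ε} < ∞` with `μₙ > 0`, `bₙ ≥ 0`, then
for every `α` with `0 < α ≤ (ε − ε₀)/(3 + ε)` (where `0 < ε₀ < ε`), the series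
`Σ μₙ^{1+ε₀} bₙ^{2(1−α)}` converges. -/
theorem summable_factored_noise_coefficients
    (ε ε₀ : ℝ) (hε : 0 < ε) (hε₀ : 0 < ε₀) (hε₀ε : ε₀ < ε)
    (μ : ℕ → ℝ) (hμ : ∀ n, 0 < μ n)
    (hμsum : Summable fun n => (μ n) ^ (-2 : ℝ))
    (b : ℕ → ℝ) (hb : ∀ n, 0 ≤ b n)
    (hbsum : Summable fun n => (b n) ^ 2 * (μ n) ^ (1 + ε))
    (α : ℝ) (hα : 0 < α) (hα' : α ≤ (ε - ε₀) / (3 + ε)) :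
    Summable fun n => (μ n) ^ (1 + ε₀) * (b n) ^ (2 * (1 - α)) :=
  summable_factored_noise_coefficients_general ε ε₀ hε hε₀ μ hμ hμsum b hb hbsum α hα hα'
end

section
/- Let (E, ℰ) be a measurable space, κ a Markov kernel on E, V : E → [0, ∞) a measurable function, γ ∈ (0, 1) and B ≥ 0 such that ∫_E V(y) κ(x, dy) ≤ γ V(x) + B for all x ∈ E. Fix R > B/(1 − γ). For x ∈ E, let ℙₓ be the law of the canonical Markov chain (Xₙ)_{n≥0} with transition kernel κ started at X₀ = x, and let τ = inf{ n ≥ 1 : V(Xₙ) ≤ R }. Then there exist constants α > 0 and C > 0, depending only on γ, B and R, such that Eₓ[e^{α τ}] ≤ C (1 + V(x)) for every x ∈ E. -/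
/-!
Off the sublevel set `{V ≤ R}` the drift condition reads `κV ≤ ρ V` with `ρ = γ + B / R < 1`.
Hence `E[V(Xₙ); τ > n]` decays like `ρⁿ⁻¹ (γ V(x) + B)`, and Markov's inequality gives
`P(τ > n) ≤ ρⁿ⁻¹ (γ V(x) + B) / R`. Writing `e^{ατ} = 1 + ∑_{n < τ} (e^α - 1) e^{αn}` and summing
these tails yields a geometric series, which converges as soon as `e^α ρ < 1`.
-/

open MeasureTheory ProbabilityTheory Set
open scoped ENNReal

section MarkovProperty

variable {E : Type*} [MeasurableSpace E]

def HasMarkovProperty (κ : Kernel E E) (P : Measure (ℕ → E)) : Prop :=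
  ∀ (n : ℕ) (f : E → ℝ≥0∞) (g : (ℕ → E) → ℝ≥0∞), Measurable f →
    Measurable[MeasurableSpace.comap (fun (ω : ℕ → E) (i : Fin (n + 1)) => ω i) inferInstance] g →
    ∫⁻ ω, g ω * f (ω (n + 1)) ∂P = ∫⁻ ω, g ω * ∫⁻ y, f y ∂(κ (ω n)) ∂P

variable {κ : Kernel E E} {P : Measure (ℕ → E)}

theorem HasMarkovProperty.setLIntegral_comp_succ (hP : HasMarkovProperty κ P) {n : ℕ}
    {s : Set (ℕ → E)}
    (hs : MeasurableSet[MeasurableSpace.comap (fun (ω : ℕ → E) (i : Fin (n + 1)) => ω i)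
      inferInstance] s)
    {f : E → ℝ≥0∞} (hf : Measurable f) :
    ∫⁻ ω in s, f (ω (n + 1)) ∂P = ∫⁻ ω in s, ∫⁻ y, f y ∂(κ (ω n)) ∂P := by
  have hs' : MeasurableSet s :=
    (measurable_pi_lambda _ fun _ => measurable_pi_apply _).comap_le _ hs
  have hind (h : (ℕ → E) → ℝ≥0∞) : s.indicator h = fun ω => s.indicator 1 ω * h ω :=
    funext fun ω => by simpa using indicator_mul_left (i := ω) s 1 h
  rw [← lintegral_indicator hs', ← lintegral_indicator hs', hind (fun ω => f (ω (n + 1))),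
    hind (fun ω => ∫⁻ y, f y ∂(κ (ω n)))]
  exact hP n f (s.indicator 1) hf (measurable_const.indicator hs)

theorem HasMarkovProperty.lintegral_comp_one (hP : HasMarkovProperty κ P) {x : E}
    (h0 : P.map (fun ω => ω 0) = Measure.dirac x) {f : E → ℝ≥0∞} (hf : Measurable f) :
    ∫⁻ ω, f (ω 1) ∂P = ∫⁻ y, f y ∂(κ x) := by
  have h := hP.setLIntegral_comp_succ (n := 0) MeasurableSet.univ hf
  simp only [Measure.restrict_univ, zero_add] at h
  rw [h, ← lintegral_map hf.lintegral_kernel (measurable_pi_apply 0), h0,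
    lintegral_dirac' _ hf.lintegral_kernel]

end MarkovProperty

section ReturnTime

variable {E : Type*} {V : E → ℝ} {R : ℝ}

def returnTimes (V : E → ℝ) (R : ℝ) (ω : ℕ → E) : Set ℕ := {n | 1 ≤ n ∧ V (ω n) ≤ R}

def noReturnUpTo (V : E → ℝ) (R : ℝ) (n : ℕ) : Set (ℕ → E) :=
  {ω | ∀ k ∈ Finset.Icc 1 n, R < V (ω k)}

theorem mem_noReturnUpTo_iff {n : ℕ} {ω : ℕ → E} :
    ω ∈ noReturnUpTo V R n ↔ ∀ k ∈ returnTimes V R ω, n < k := by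
  simp only [noReturnUpTo, returnTimes, mem_ofPred_eq, Finset.mem_Icc, and_imp]
  refine ⟨fun h k hk1 hkR => ?_, fun h k hk1 hkn => ?_⟩
  · by_contra! hkn
    exact (h k hk1 hkn).not_ge hkR
  · by_contra! hkR
    exact (h k hk1 hkR).not_ge hkn

theorem noReturnUpTo_succ_subset (n : ℕ) : noReturnUpTo V R (n + 1) ⊆ noReturnUpTo V R n :=
  fun _ hω k hk => hω k (Finset.Icc_subset_Icc_right n.le_succ hk)

theorem measurableSet_comap_noReturnUpTo [MeasurableSpace E] (hV : Measurable V) (n : ℕ) :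
    MeasurableSet[MeasurableSpace.comap (fun (ω : ℕ → E) (i : Fin (n + 1)) => ω i)
      inferInstance] (noReturnUpTo V R n) := by
  refine ⟨{v | ∀ i : Fin (n + 1), 1 ≤ (i : ℕ) → R < V (v i)}, ?_, ?_⟩
  · exact measurableSet_setOfPred.2 <| Measurable.forall fun i => measurable_const.imp <|
      measurableSet_setOfPred.1 <|
        measurableSet_lt measurable_const (hV.comp (measurable_pi_apply i))
  · ext ω
    simp only [noReturnUpTo, mem_preimage, mem_ofPred_eq, Finset.mem_Icc, and_imp]
    exact ⟨fun h k hk1 hkn => h ⟨k, Nat.lt_succ_of_le hkn⟩ hk1,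
      fun h i hi => h i hi (Nat.le_of_lt_succ i.isLt)⟩

theorem measurableSet_noReturnUpTo [MeasurableSpace E] (hV : Measurable V) (n : ℕ) :
    MeasurableSet (noReturnUpTo V R n) :=
  (measurable_pi_lambda _ fun _ => measurable_pi_apply _).comap_le _
    (measurableSet_comap_noReturnUpTo hV n)

end ReturnTime

section Drift

variable {E : Type*} [MeasurableSpace E] {κ : Kernel E E} {P : Measure (ℕ → E)} {V : E → ℝ}
  {R ρ : ℝ}

theorem setLIntegral_noReturnUpTo_succ_le (hP : HasMarkovProperty κ P) (hV : Measurable V)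
    (hdrift : ∀ y, R < V y → ∫⁻ z, .ofReal (V z) ∂(κ y) ≤ .ofReal ρ * .ofReal (V y))
    {n : ℕ} (hn : 1 ≤ n) :
    ∫⁻ ω in noReturnUpTo V R (n + 1), .ofReal (V (ω (n + 1))) ∂P
      ≤ .ofReal ρ * ∫⁻ ω in noReturnUpTo V R n, .ofReal (V (ω n)) ∂P :=
  calc ∫⁻ ω in noReturnUpTo V R (n + 1), .ofReal (V (ω (n + 1))) ∂P
      ≤ ∫⁻ ω in noReturnUpTo V R n, .ofReal (V (ω (n + 1))) ∂P :=
        lintegral_mono_set (noReturnUpTo_succ_subset n)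
    _ = ∫⁻ ω in noReturnUpTo V R n, ∫⁻ z, .ofReal (V z) ∂(κ (ω n)) ∂P :=
        hP.setLIntegral_comp_succ (measurableSet_comap_noReturnUpTo hV n) hV.ennreal_ofReal
    _ ≤ ∫⁻ ω in noReturnUpTo V R n, .ofReal ρ * .ofReal (V (ω n)) ∂P :=
        setLIntegral_mono' (measurableSet_noReturnUpTo hV n) fun _ hω =>
          hdrift _ (hω n (Finset.mem_Icc.2 ⟨hn, le_rfl⟩))
    _ = .ofReal ρ * ∫⁻ ω in noReturnUpTo V R n, .ofReal (V (ω n)) ∂P :=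
        lintegral_const_mul' _ _ ENNReal.ofReal_ne_top

theorem setLIntegral_noReturnUpTo_le (hP : HasMarkovProperty κ P) {x : E}
    (h0 : P.map (fun ω => ω 0) = Measure.dirac x) (hV : Measurable V)
    (hdrift : ∀ y, R < V y → ∫⁻ z, .ofReal (V z) ∂(κ y) ≤ .ofReal ρ * .ofReal (V y)) (n : ℕ) :
    ∫⁻ ω in noReturnUpTo V R (n + 1), .ofReal (V (ω (n + 1))) ∂P
      ≤ .ofReal ρ ^ n * ∫⁻ y, .ofReal (V y) ∂(κ x) := by
  induction n with
  | zero =>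
    rw [pow_zero, one_mul, ← hP.lintegral_comp_one h0 hV.ennreal_ofReal]
    exact setLIntegral_le_lintegral _ _
  | succ n ih =>
    calc _ ≤ .ofReal ρ * ∫⁻ ω in noReturnUpTo V R (n + 1), .ofReal (V (ω (n + 1))) ∂P :=
          setLIntegral_noReturnUpTo_succ_le hP hV hdrift n.succ_pos
      _ ≤ .ofReal ρ * (.ofReal ρ ^ n * ∫⁻ y, .ofReal (V y) ∂(κ x)) := by gcongr
      _ = .ofReal ρ ^ (n + 1) * ∫⁻ y, .ofReal (V y) ∂(κ x) := by rw [pow_succ', mul_assoc]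

theorem measure_noReturnUpTo_succ_le (hP : HasMarkovProperty κ P) {x : E}
    (h0 : P.map (fun ω => ω 0) = Measure.dirac x) (hV : Measurable V) (hR : 0 < R) (hρ : 0 ≤ ρ)
    (hdrift : ∀ y, R < V y → ∫⁻ z, .ofReal (V z) ∂(κ y) ≤ .ofReal ρ * .ofReal (V y)) (n : ℕ) :
    P (noReturnUpTo V R (n + 1)) ≤ .ofReal (ρ ^ n / R) * ∫⁻ y, .ofReal (V y) ∂(κ x) := by
  have hmarkov : .ofReal R * P (noReturnUpTo V R (n + 1))
      ≤ ∫⁻ ω in noReturnUpTo V R (n + 1), .ofReal (V (ω (n + 1))) ∂P := by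
    rw [← setLIntegral_const]
    exact setLIntegral_mono' (measurableSet_noReturnUpTo hV _) fun _ hω =>
      ENNReal.ofReal_le_ofReal (hω (n + 1) (Finset.mem_Icc.2 ⟨n.succ_pos, le_rfl⟩)).le
  have hRpos : ENNReal.ofReal R ≠ 0 := (ENNReal.ofReal_pos.2 hR).ne'
  rw [ENNReal.ofReal_div_of_pos hR, ENNReal.ofReal_pow hρ, mul_comm, ← mul_div_assoc,
    ENNReal.le_div_iff_mul_le (.inl hRpos) (.inl ENNReal.ofReal_ne_top), mul_comm,
    mul_comm _ (_ ^ n)]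
  exact hmarkov.trans (setLIntegral_noReturnUpTo_le hP h0 hV hdrift n)

end Drift

open Classical in
theorem ite_pow_sInf_le_one_add_tsum {u : ℝ} (hu : 1 < u) (s : Set ℕ) :
    (if s.Nonempty then ENNReal.ofReal (u ^ sInf s) else ⊤)
      ≤ 1 + ∑' n, if ∀ k ∈ s, n < k then ENNReal.ofReal ((u - 1) * u ^ n) else 0 := by
  have hterm : ∀ n, 0 ≤ (u - 1) * u ^ n := fun n => by have := hu.le; positivity
  split_ifs with hs
  · set m := sInf s
    have hgeom : u ^ m = 1 + ∑ n ∈ Finset.range m, (u - 1) * u ^ n := by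
      rw [← Finset.mul_sum, mul_comm, geom_sum_mul, add_sub_cancel]
    have hbefore : ∀ n ∈ Finset.range m, ∀ k ∈ s, n < k := fun n hn k hk =>
      (Finset.mem_range.1 hn).trans_le (Nat.sInf_le hk)
    calc ENNReal.ofReal (u ^ m)
        = 1 + ∑ n ∈ Finset.range m, ENNReal.ofReal ((u - 1) * u ^ n) := by
          rw [hgeom, ENNReal.ofReal_add zero_le_one (Finset.sum_nonneg fun n _ => hterm n),
            ENNReal.ofReal_one, ENNReal.ofReal_sum_of_nonneg fun n _ => hterm n]
      _ = 1 + ∑ n ∈ Finset.range m,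
            if ∀ k ∈ s, n < k then ENNReal.ofReal ((u - 1) * u ^ n) else 0 := by
          congr 1
          exact Finset.sum_congr rfl fun n hn => (if_pos (hbefore n hn)).symm
      _ ≤ _ := by gcongr; exact ENNReal.sum_le_tsum _
  · have hempty : ∀ n, ∀ k ∈ s, n < k := fun n k hk => (hs ⟨k, hk⟩).elim
    rw [tsum_congr fun n => if_pos (hempty n)]
    refine le_add_left (top_le_iff.1 ?_).ge
    calc ⊤ = ∑' _ : ℕ, ENNReal.ofReal (u - 1) :=
          (ENNReal.tsum_const_eq_top_of_ne_zero (ENNReal.ofReal_pos.2 (sub_pos.2 hu)).ne').symm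
      _ ≤ ∑' n, ENNReal.ofReal ((u - 1) * u ^ n) :=
          ENNReal.tsum_le_tsum fun n => ENNReal.ofReal_le_ofReal <|
            le_mul_of_one_le_right (sub_pos.2 hu).le (one_le_pow₀ hu.le)

section ExpMoment

variable {E : Type*} [MeasurableSpace E] {κ : Kernel E E} {P : Measure (ℕ → E)} {V : E → ℝ}
  {R ρ α : ℝ}

open Classical in
theorem lintegral_exp_mul_returnTime_le_tsum [IsProbabilityMeasure P] (hV : Measurable V)
    (hα : 0 < α) :
    ∫⁻ ω, (if (returnTimes V R ω).Nonempty
        then ENNReal.ofReal (Real.exp (α * (sInf (returnTimes V R ω) : ℕ))) else ⊤) ∂P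
      ≤ 1 + ∑' n, .ofReal ((Real.exp α - 1) * Real.exp α ^ n) * P (noReturnUpTo V R n) := by
  have hexp (m : ℕ) : Real.exp (α * m) = Real.exp α ^ m := by rw [mul_comm, Real.exp_nat_mul]
  have hpt (ω : ℕ → E) : (if (returnTimes V R ω).Nonempty
      then ENNReal.ofReal (Real.exp (α * (sInf (returnTimes V R ω) : ℕ))) else ⊤)
      ≤ 1 + ∑' n, (noReturnUpTo V R n).indicator
          (fun _ => .ofReal ((Real.exp α - 1) * Real.exp α ^ n)) ω := by
    simp only [indicator_apply, mem_noReturnUpTo_iff, hexp]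
    exact ite_pow_sInf_le_one_add_tsum (Real.one_lt_exp_iff.2 hα) _
  refine (lintegral_mono hpt).trans_eq ?_
  rw [lintegral_add_left measurable_const, lintegral_const, measure_univ, mul_one,
    lintegral_tsum fun n =>
      (measurable_const.indicator (measurableSet_noReturnUpTo hV n)).aemeasurable]
  simp only [lintegral_indicator_const (measurableSet_noReturnUpTo hV _)]

open Classical in
theorem lintegral_exp_mul_returnTime_le (hP : HasMarkovProperty κ P) [IsProbabilityMeasure P]
    {x : E} (h0 : P.map (fun ω => ω 0) = Measure.dirac x) (hV : Measurable V) (hR : 0 < R)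
    (hρ : 0 ≤ ρ)
    (hdrift : ∀ y, R < V y → ∫⁻ z, .ofReal (V z) ∂(κ y) ≤ .ofReal ρ * .ofReal (V y))
    (hα : 0 < α) (hαρ : Real.exp α * ρ < 1) :
    ∫⁻ ω, (if (returnTimes V R ω).Nonempty
        then ENNReal.ofReal (Real.exp (α * (sInf (returnTimes V R ω) : ℕ))) else ⊤) ∂P
      ≤ .ofReal (Real.exp α) + .ofReal ((Real.exp α - 1) * Real.exp α / (1 - Real.exp α * ρ) / R)
          * ∫⁻ y, .ofReal (V y) ∂(κ x) := by
  set u := Real.exp α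
  set K := ∫⁻ y, ENNReal.ofReal (V y) ∂(κ x)
  have hu : 0 ≤ u - 1 := sub_nonneg.2 (Real.one_le_exp hα.le)
  have hgeom : HasSum (fun n => (u - 1) * u * (u * ρ) ^ n / R)
      ((u - 1) * u / (1 - u * ρ) / R) := by
    rw [div_eq_mul_inv _ (1 - u * ρ)]
    exact ((hasSum_geometric_of_lt_one (by positivity) hαρ).mul_left _).div_const _
  have htail (n : ℕ) : .ofReal ((u - 1) * u ^ (n + 1)) * P (noReturnUpTo V R (n + 1))
      ≤ .ofReal ((u - 1) * u * (u * ρ) ^ n / R) * K :=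
    calc _ ≤ .ofReal ((u - 1) * u ^ (n + 1)) * (.ofReal (ρ ^ n / R) * K) := by
          gcongr; exact measure_noReturnUpTo_succ_le hP h0 hV hR hρ hdrift n
      _ = .ofReal ((u - 1) * u * (u * ρ) ^ n / R) * K := by
          rw [← mul_assoc, ← ENNReal.ofReal_mul (by positivity)]
          congr 2; ring
  calc _ ≤ 1 + ∑' n, .ofReal ((u - 1) * u ^ n) * P (noReturnUpTo V R n) :=
        lintegral_exp_mul_returnTime_le_tsum hV hα
    _ = 1 + (.ofReal ((u - 1) * u ^ 0) * P (noReturnUpTo V R 0)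
          + ∑' n, .ofReal ((u - 1) * u ^ (n + 1)) * P (noReturnUpTo V R (n + 1))) := by
        rw [tsum_eq_zero_add' ENNReal.summable]
    _ ≤ 1 + (.ofReal (u - 1) + ∑' n, .ofReal ((u - 1) * u * (u * ρ) ^ n / R) * K) := by
        gcongr 1 + (?_ + ?_)
        · rw [pow_zero, mul_one]
          exact mul_le_of_le_one_right' prob_le_one
        · exact ENNReal.tsum_le_tsum htail
    _ = .ofReal u + .ofReal ((u - 1) * u / (1 - u * ρ) / R) * K := by
        rw [ENNReal.tsum_mul_right, ← ENNReal.ofReal_tsum_of_nonneg (fun n => by positivity)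
          hgeom.summable, hgeom.tsum_eq, ← add_assoc, ← ENNReal.ofReal_one,
          ← ENNReal.ofReal_add zero_le_one hu, add_sub_cancel]

theorem add_div_lt_one_of_div_one_sub_lt {γ B R : ℝ} (hγ1 : γ < 1) (hB : 0 ≤ B)
    (hR : B / (1 - γ) < R) : γ + B / R < 1 := by
  have hR0 : 0 < R := (div_nonneg hB (sub_pos.2 hγ1).le).trans_lt hR
  rw [div_lt_iff₀ (sub_pos.2 hγ1)] at hR
  have : B / R < 1 - γ := by rw [div_lt_iff₀ hR0]; linarith
  linarith

theorem add_le_add_div_mul_of_lt {γ B R v : ℝ} (hB : 0 ≤ B) (hR : 0 < R) (hv : R < v) :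
    γ * v + B ≤ (γ + B / R) * v := by
  have : B ≤ B / R * v := by
    rw [div_mul_eq_mul_div, le_div_iff₀ hR]; exact mul_le_mul_of_nonneg_left hv.le hB
  linarith

theorem exists_pos_exp_mul_lt_one {ρ : ℝ} (hρ0 : 0 ≤ ρ) (hρ1 : ρ < 1) :
    ∃ α > 0, Real.exp α * ρ < 1 := by
  have hexp : Real.exp (Real.log (2 / (1 + ρ))) = 2 / (1 + ρ) := Real.exp_log (by positivity)
  refine ⟨Real.log (2 / (1 + ρ)),
    Real.log_pos (by rw [lt_div_iff₀ (by positivity)]; linarith), ?_⟩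
  rw [hexp, div_mul_eq_mul_div, div_lt_one (by positivity)]
  linarith

open MeasureTheory ProbabilityTheory Classical in
/-- Lyapunov drift condition `∫ V dκ(x,·) ≤ γ V(x) + B` (with `γ ∈ (0,1)`,
`B ≥ 0`) implies a uniform exponential moment for the first return time
`τ = inf {n ≥ 1 : V(Xₙ) ≤ R}` of the canonical Markov chain to the sublevel set
`{V ≤ R}`, for any fixed `R > B/(1−γ)`: there are `α > 0`, `C > 0` depending only on
`γ, B, R` with `Eₓ[e^{ατ}] ≤ C (1 + V(x))` for all `x` (and `e^{ατ} = ∞` when `τ = ∞`). -/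
theorem lyapunov_drift_exp_return_time
    (γ B R : ℝ) (hγ0 : 0 < γ) (hγ1 : γ < 1) (hB : 0 ≤ B) (hR : B / (1 - γ) < R) :
    ∃ α > (0 : ℝ), ∃ C > (0 : ℝ),
      ∀ (E : Type) [mE : MeasurableSpace E] (κ : Kernel E E), IsMarkovKernel κ →
        ∀ V : E → ℝ, Measurable V → (∀ x, 0 ≤ V x) →
        (∀ x, ∫⁻ y, ENNReal.ofReal (V y) ∂(κ x) ≤ ENNReal.ofReal (γ * V x + B)) →
        ∀ Pm : E → Measure (ℕ → E),
          (∀ x, IsProbabilityMeasure (Pm x)) →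
          (∀ x, (Pm x).map (fun ω => ω 0) = Measure.dirac x) →
          -- Markov property with transition kernel κ, in integral form: for every
          -- bounded measurable functional `g` of the path up to time `n`,
          -- `E[g · f(X_{n+1})] = E[g · ∫ f dκ(Xₙ, ·)]`.
          (∀ (x : E) (n : ℕ) (f : E → ENNReal) (g : (ℕ → E) → ENNReal),
            Measurable f →
            Measurable[MeasurableSpace.comap
              (fun (ω : ℕ → E) (i : Fin (n + 1)) => ω i) inferInstance] g →
            ∫⁻ ω, g ω * f (ω (n + 1)) ∂(Pm x)
              = ∫⁻ ω, g ω * ∫⁻ y, f y ∂(κ (ω n)) ∂(Pm x)) →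
          ∀ x : E,
            ∫⁻ ω, (if {n : ℕ | 1 ≤ n ∧ V (ω n) ≤ R}.Nonempty
                then ENNReal.ofReal
                  (Real.exp (α * (sInf {n : ℕ | 1 ≤ n ∧ V (ω n) ≤ R} : ℕ)))
                else ⊤) ∂(Pm x)
              ≤ ENNReal.ofReal (C * (1 + V x)) := by
  have hR0 : 0 < R := (div_nonneg hB (sub_pos.2 hγ1).le).trans_lt hR
  set ρ := γ + B / R
  have hρ0 : 0 ≤ ρ := by positivity
  obtain ⟨α, hα, hαρ⟩ :=
    exists_pos_exp_mul_lt_one hρ0 (add_div_lt_one_of_div_one_sub_lt hγ1 hB hR)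
  set D := (Real.exp α - 1) * Real.exp α / (1 - Real.exp α * ρ) / R
  have hD : 0 ≤ D := by
    have := Real.one_le_exp hα.le
    have := sub_pos.2 hαρ
    positivity
  refine ⟨α, hα, Real.exp α + D * (γ + B), by positivity, ?_⟩
  intro E _ κ _ V hV hV0 hdrift Pm hPm h0 hMarkov x
  have hdrift_above (y : E) (hy : R < V y) :
      ∫⁻ z, .ofReal (V z) ∂(κ y) ≤ .ofReal ρ * .ofReal (V y) := by
    rw [← ENNReal.ofReal_mul hρ0]
    exact (hdrift y).trans (ENNReal.ofReal_le_ofReal (add_le_add_div_mul_of_lt hB hR0 hy))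
  have := hPm x
  have hVx := hV0 x
  calc _ ≤ .ofReal (Real.exp α) + .ofReal D * ∫⁻ y, .ofReal (V y) ∂(κ x) :=
        lintegral_exp_mul_returnTime_le (hMarkov x) (h0 x) hV hR0 hρ0 hdrift_above hα hαρ
    _ ≤ .ofReal (Real.exp α) + .ofReal D * .ofReal (γ * V x + B) := by gcongr; exact hdrift x
    _ = .ofReal (Real.exp α + D * (γ * V x + B)) := by
        rw [ENNReal.ofReal_add (Real.exp_pos α).le (by positivity), ENNReal.ofReal_mul hD]
    _ ≤ .ofReal ((Real.exp α + D * (γ + B)) * (1 + V x)) :=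
        ENNReal.ofReal_le_ofReal <| by
          nlinarith [mul_nonneg hD hγ0.le, mul_nonneg (mul_nonneg hD hB) hVx,
            mul_nonneg (Real.exp_pos α).le hVx]
end ExpMoment
end

section
/- Let (E, ℰ) be a measurable space, κ a Markov kernel on E, V : E → [0, ∞) a measurable function, γ ∈ (0, 1) and B ≥ 0 such that ∫_E V(y) κ(x, dy) ≤ γ V(x) + B for all x ∈ E. Then every invariant probability measure μ of κ (i.e. μκ = μ) satisfies ∫_E V dμ ≤ B/(1 − γ); in particular ∫_E V dμ < ∞. -/
/-!
Integrating the drift inequality against `μ = μκ` gives `∫ V dμ ≤ γ ∫ V dμ + B`, which yields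
the bound once `∫ V dμ` is known to be finite. To get finiteness, apply the same step to the
bounded functions `min n (a V)`: invariance gives `F a ≤ F (γ a) + a B` for
`F a = ∫ min n (a V) dμ`, iterating gives `F 1 ≤ F (γ^k) + B ∑_{j<k} γ^j`, and `F (γ^k) → 0`
by dominated convergence. Letting `n → ∞` concludes by monotone convergence.
-/

open MeasureTheory ProbabilityTheory Filter Topology
open scoped ENNReal

theorem ENNReal.apply_one_le_of_le_apply_mul_add {F : ℝ≥0∞ → ℝ≥0∞} {g b : ℝ≥0∞}
    (hF : ∀ a, F a ≤ F (g * a) + a * b)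
    (hlim : Tendsto (fun k : ℕ => F (g ^ k)) atTop (𝓝 0)) :
    F 1 ≤ (1 - g)⁻¹ * b := by
  have hiter : ∀ k, F 1 ≤ F (g ^ k) + (∑ j ∈ Finset.range k, g ^ j) * b := by
    intro k
    induction k with
    | zero => simp
    | succ k ih =>
      calc F 1 ≤ F (g ^ k) + (∑ j ∈ Finset.range k, g ^ j) * b := ih
        _ ≤ F (g ^ (k + 1)) + g ^ k * b + (∑ j ∈ Finset.range k, g ^ j) * b := by
          rw [pow_succ']
          gcongr
          exact hF _
        _ = F (g ^ (k + 1)) + (∑ j ∈ Finset.range (k + 1), g ^ j) * b := by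
          rw [Finset.sum_range_succ]
          ring
  have hgeom : ∀ k, ∑ j ∈ Finset.range k, g ^ j ≤ (1 - g)⁻¹ := fun k =>
    (ENNReal.sum_le_tsum _).trans_eq (ENNReal.tsum_geometric g)
  refine ge_of_tendsto' (by simpa using hlim.add_const ((1 - g)⁻¹ * b)) fun k => ?_
  calc F 1 ≤ F (g ^ k) + (∑ j ∈ Finset.range k, g ^ j) * b := hiter k
    _ ≤ F (g ^ k) + (1 - g)⁻¹ * b := by gcongr; exact hgeom k

namespace MeasureTheory

variable {E : Type*} [MeasurableSpace E] {μ : Measure E}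

theorem lintegral_eq_iSup_lintegral_min_natCast {f : E → ℝ≥0∞} (hf : Measurable f) :
    ∫⁻ x, f x ∂μ = ⨆ n : ℕ, ∫⁻ x, min (n : ℝ≥0∞) (f x) ∂μ := by
  have hmono : Monotone fun (n : ℕ) (x : E) => min (n : ℝ≥0∞) (f x) :=
    fun m n hmn x => min_le_min_right _ (Nat.cast_le.mpr hmn)
  rw [← lintegral_iSup (fun n => measurable_const.min hf) hmono]
  congr with x
  rw [← iSup_inf_eq, ENNReal.iSup_natCast, top_inf_eq]

theorem tendsto_lintegral_min_const_mul [IsFiniteMeasure μ] {W : E → ℝ≥0∞} (hW : Measurable W)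
    (hW_fin : ∀ᵐ x ∂μ, W x ≠ ∞) {c : ℝ≥0∞} (hc : c ≠ ∞) {a : ℕ → ℝ≥0∞}
    (ha : Tendsto a atTop (𝓝 0)) :
    Tendsto (fun k => ∫⁻ x, min c (a k * W x) ∂μ) atTop (𝓝 0) := by
  have hpoint : ∀ᵐ x ∂μ, Tendsto (fun k => min c (a k * W x)) atTop (𝓝 0) := by
    filter_upwards [hW_fin] with x hx
    have hmul : Tendsto (fun k => a k * W x) atTop (𝓝 0) := by
      simpa using ENNReal.Tendsto.mul_const ha (Or.inr hx)
    exact tendsto_of_tendsto_of_tendsto_of_le_of_le tendsto_const_nhds hmul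
      (fun _ => zero_le) (fun _ => min_le_right _ _)
  simpa using tendsto_lintegral_of_dominated_convergence (fun _ => c)
    (fun k => measurable_const.min (hW.const_mul (a k)))
    (fun _ => Eventually.of_forall fun _ => min_le_left _ _)
    (by simpa using ENNReal.mul_ne_top hc (measure_ne_top μ Set.univ)) hpoint

end MeasureTheory

namespace ProbabilityTheory.Kernel

variable {E : Type*} [MeasurableSpace E] {κ : Kernel E E} {μ : Measure E}

theorem lintegral_lintegral_eq_of_bind_eq (hinv : μ.bind κ = μ) {f : E → ℝ≥0∞}
    (hf : Measurable f) :
    ∫⁻ x, ∫⁻ y, f y ∂κ x ∂μ = ∫⁻ x, f x ∂μ := by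
  conv_rhs => rw [← hinv]
  exact (Measure.lintegral_bind κ.measurable.aemeasurable hf.aemeasurable).symm

theorem lintegral_min_const_mul_le [IsMarkovKernel κ] {W : E → ℝ≥0∞} (hW : Measurable W)
    {g b : ℝ≥0∞} {x : E} (hdrift : ∫⁻ y, W y ∂κ x ≤ g * W x + b) (c a : ℝ≥0∞) :
    ∫⁻ y, min c (a * W y) ∂κ x ≤ min c (g * a * W x) + a * b := by
  have hmin : ∫⁻ y, min c (a * W y) ∂κ x ≤ min c (g * a * W x + a * b) := by
    refine le_min ?_ ?_
    · calc ∫⁻ y, min c (a * W y) ∂κ x ≤ ∫⁻ _, c ∂κ x := lintegral_mono fun _ => min_le_left _ _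
        _ = c := by simp
    · calc ∫⁻ y, min c (a * W y) ∂κ x ≤ ∫⁻ y, a * W y ∂κ x :=
            lintegral_mono fun _ => min_le_right _ _
        _ = a * ∫⁻ y, W y ∂κ x := lintegral_const_mul a hW
        _ ≤ a * (g * W x + b) := by gcongr
        _ = g * a * W x + a * b := by ring
  calc ∫⁻ y, min c (a * W y) ∂κ x ≤ min c (g * a * W x + a * b) := hmin
    _ ≤ min (c + a * b) (g * a * W x + a * b) := min_le_min_right _ le_self_add
    _ = min c (g * a * W x) + a * b := min_add_add_right _ _ _

theorem lintegral_min_const_mul_le_of_bind_eq [IsMarkovKernel κ] [IsProbabilityMeasure μ]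
    (hinv : μ.bind κ = μ) {W : E → ℝ≥0∞} (hW : Measurable W) {g b : ℝ≥0∞}
    (hdrift : ∀ x, ∫⁻ y, W y ∂κ x ≤ g * W x + b) (c a : ℝ≥0∞) :
    ∫⁻ x, min c (a * W x) ∂μ ≤ ∫⁻ x, min c (g * a * W x) ∂μ + a * b := by
  rw [← lintegral_lintegral_eq_of_bind_eq hinv (measurable_const.min (hW.const_mul a))]
  calc ∫⁻ x, ∫⁻ y, min c (a * W y) ∂κ x ∂μ
      ≤ ∫⁻ x, (min c (g * a * W x) + a * b) ∂μ :=
        lintegral_mono fun x => lintegral_min_const_mul_le hW (hdrift x) c a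
    _ = ∫⁻ x, min c (g * a * W x) ∂μ + a * b := by
        rw [lintegral_add_right _ measurable_const, MeasureTheory.lintegral_const, measure_univ, mul_one]

theorem lintegral_le_of_bind_eq_of_drift [IsMarkovKernel κ] [IsProbabilityMeasure μ]
    (hinv : μ.bind κ = μ) {W : E → ℝ≥0∞} (hW : Measurable W) (hW_fin : ∀ᵐ x ∂μ, W x ≠ ∞)
    {g b : ℝ≥0∞} (hg : g < 1) (hdrift : ∀ x, ∫⁻ y, W y ∂κ x ≤ g * W x + b) :
    ∫⁻ x, W x ∂μ ≤ (1 - g)⁻¹ * b := by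
  rw [lintegral_eq_iSup_lintegral_min_natCast hW]
  refine iSup_le fun n => ?_
  simpa using ENNReal.apply_one_le_of_le_apply_mul_add
    (F := fun a => ∫⁻ x, min (n : ℝ≥0∞) (a * W x) ∂μ)
    (fun a => by simpa only [mul_assoc] using
      lintegral_min_const_mul_le_of_bind_eq hinv hW hdrift n a)
    (tendsto_lintegral_min_const_mul hW hW_fin (ENNReal.natCast_ne_top n)
      (ENNReal.tendsto_pow_atTop_nhds_zero_of_lt_one hg))

end ProbabilityTheory.Kernel

theorem invariant_measure_moment_bound_general
    {E : Type*} [MeasurableSpace E]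
    (κ : Kernel E E) [IsMarkovKernel κ]
    (V : E → ℝ) (hVmeas : Measurable V)
    (γ B : ℝ) (hγ0 : 0 < γ) (hγ1 : γ < 1)
    (hdrift : ∀ x, ∫⁻ y, ENNReal.ofReal (V y) ∂(κ x) ≤ ENNReal.ofReal (γ * V x + B))
    (μ : Measure E) [IsProbabilityMeasure μ]
    (hinv : μ.bind (fun x => κ x) = μ) :
    ∫⁻ x, ENNReal.ofReal (V x) ∂μ ≤ ENNReal.ofReal (B / (1 - γ)) ∧
      ∫⁻ x, ENNReal.ofReal (V x) ∂μ < ⊤ := by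
  have hdrift' : ∀ x, ∫⁻ y, ENNReal.ofReal (V y) ∂κ x ≤
      ENNReal.ofReal γ * ENNReal.ofReal (V x) + ENNReal.ofReal B := fun x =>
    (hdrift x).trans (ENNReal.ofReal_add_le.trans_eq (by rw [ENNReal.ofReal_mul hγ0.le]))
  have hbound : (1 - ENNReal.ofReal γ)⁻¹ * ENNReal.ofReal B = ENNReal.ofReal (B / (1 - γ)) := by
    rw [← ENNReal.ofReal_one, ← ENNReal.ofReal_sub _ hγ0.le,
      ENNReal.ofReal_div_of_pos (sub_pos.mpr hγ1), ENNReal.div_eq_inv_mul]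
  have hmain := Kernel.lintegral_le_of_bind_eq_of_drift hinv hVmeas.ennreal_ofReal
    (Eventually.of_forall fun _ => ENNReal.ofReal_ne_top) (ENNReal.ofReal_lt_one.mpr hγ1) hdrift'
  rw [hbound] at hmain
  exact ⟨hmain, hmain.trans_lt ENNReal.ofReal_lt_top⟩

/-- under the Lyapunov drift condition `∫ V dκ(x,·) ≤ γ V(x) + B` with
`γ ∈ (0,1)`, `B ≥ 0`, every invariant probability measure `μ` of the Markov kernel `κ`
satisfies `∫ V dμ ≤ B/(1−γ)`; in particular `∫ V dμ < ∞`. -/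
theorem invariant_measure_moment_bound
    {E : Type*} [MeasurableSpace E]
    (κ : Kernel E E) [IsMarkovKernel κ]
    (V : E → ℝ) (hVmeas : Measurable V) (hVnn : ∀ x, 0 ≤ V x)
    (γ B : ℝ) (hγ0 : 0 < γ) (hγ1 : γ < 1) (hB : 0 ≤ B)
    (hdrift : ∀ x, ∫⁻ y, ENNReal.ofReal (V y) ∂(κ x) ≤ ENNReal.ofReal (γ * V x + B))
    (μ : Measure E) [IsProbabilityMeasure μ]
    (hinv : μ.bind (fun x => κ x) = μ) :
    ∫⁻ x, ENNReal.ofReal (V x) ∂μ ≤ ENNReal.ofReal (B / (1 - γ)) ∧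
      ∫⁻ x, ENNReal.ofReal (V x) ∂μ < ⊤ :=
  invariant_measure_moment_bound_general κ V hVmeas γ B hγ0 hγ1 hdrift μ hinv
end
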